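/- arXiv:1802.01359 — 7 statements merged into one kernel-verified Lean document; each statement's English description precedes it below -/
import Mathlib

section
/- Let g ∈ L²(ℝ) and let W : ℝ → ℝ be measurable with 0 ≤ W(ξ) ≤ 1 for all ξ ∈ ℝ. Then the functions ξ ↦ (1 − W(ξ))^m·g(ξ) converge in L²(ℝ), as m → ∞, to the function ξ ↦ χ_{{W=0}}(ξ)·g(ξ), i.e. to g restricted to the zero set of W (and 0 elsewhere). -/
open MeasureTheory Filter ENNReal Topology

/-! For `ξ` off the zero set of `W`, `|1 - W ξ| < 1`, so `(1 - W ξ)^m → 0`; on it the difference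
vanishes identically. The integrand is dominated by `2‖g‖ ∈ L²`, so dominated convergence
in `L²` concludes. -/

theorem tendsto_eLpNorm_zero_of_dominated {α E ι : Type*} [MeasurableSpace α] {μ : Measure α}
    [NormedAddCommGroup E] {l : Filter ι} [l.IsCountablyGenerated] {p : ℝ≥0∞}
    (hp0 : p ≠ 0) (hp : p ≠ ∞) {F : ι → α → E} {bound : α → ℝ}
    (hF_meas : ∀ n, AEStronglyMeasurable (F n) μ) (h_bound : ∀ n, ∀ᵐ a ∂μ, ‖F n a‖ ≤ bound a)
    (hbound : MemLp bound p μ) (h_lim : ∀ᵐ a ∂μ, Tendsto (fun n => F n a) l (𝓝 0)) :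
    Tendsto (fun n => eLpNorm (F n) p μ) l (𝓝 0) := by
  have hp_pos : 0 < p.toReal := toReal_pos hp0 hp
  suffices Tendsto (fun n => ∫⁻ a, ‖F n a‖ₑ ^ p.toReal ∂μ) l (𝓝 0) by
    simp only [eLpNorm_eq_lintegral_rpow_enorm_toReal hp0 hp]
    convert! continuous_rpow_const.continuousAt.tendsto.comp this
    simp [zero_rpow_of_pos (inv_pos.mpr hp_pos)]
  have h_bound' : ∀ n, ∀ᵐ a ∂μ, ‖F n a‖ₑ ^ p.toReal ≤ ‖bound a‖ₑ ^ p.toReal := fun n => by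
    filter_upwards [h_bound n] with a ha
    gcongr
    exact enorm_le_iff_norm_le.mpr (ha.trans (le_abs_self _))
  have h_fin : ∫⁻ a, ‖bound a‖ₑ ^ p.toReal ∂μ ≠ ∞ :=
    (lintegral_rpow_enorm_lt_top_of_eLpNorm_lt_top hp0 hp hbound.2).ne
  have h_lim' : ∀ᵐ a ∂μ, Tendsto (fun n => ‖F n a‖ₑ ^ p.toReal) l (𝓝 0) := by
    filter_upwards [h_lim] with a ha
    convert! continuous_rpow_const.continuousAt.tendsto.comp (tendsto_coe.mpr ha.nnnorm)
    simp [zero_rpow_of_pos hp_pos]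
  simpa using tendsto_lintegral_filter_of_dominated_convergence' _
    (.of_forall fun n => ((hF_meas n).enorm).pow_const _) (.of_forall h_bound') h_fin h_lim'

theorem tendsto_one_sub_pow_of_mem_Icc {w : ℝ} (hw : w ∈ Set.Icc (0 : ℝ) 1) :
    Tendsto (fun m : ℕ => (1 - w) ^ m) atTop (𝓝 (if w = 0 then 1 else 0)) := by
  split_ifs with h
  · simp [h]
  · refine tendsto_pow_atTop_nhds_zero_of_abs_lt_one ?_
    rw [abs_lt]
    constructor <;> linarith [hw.2, lt_of_le_of_ne hw.1 (Ne.symm h)]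

theorem abs_one_sub_pow_le_one_of_mem_Icc {w : ℝ} (hw : w ∈ Set.Icc (0 : ℝ) 1) (m : ℕ) :
    |(1 - w) ^ m| ≤ 1 := by
  rw [abs_pow]
  exact pow_le_one₀ (abs_nonneg _) (abs_le.mpr ⟨by linarith [hw.2], by linarith [hw.1]⟩)

/-- If `g ∈ L²(ℝ)` and `W : ℝ → ℝ` is measurable with values in `[0,1]`, then the functions
`ξ ↦ (1 - W ξ)^m * g ξ` converge in `L²`, as `m → ∞`, to `g` restricted to the zero set of
`W` (i.e. to `χ_{{W = 0}} * g`). -/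
theorem stmt6 (g : ℝ → ℂ) (hg : MemLp g 2 volume) (W : ℝ → ℝ) (hWmeas : Measurable W)
    (hW : ∀ ξ : ℝ, W ξ ∈ Set.Icc (0 : ℝ) 1) :
    Filter.Tendsto
      (fun m : ℕ => eLpNorm
        (fun ξ : ℝ => ((1 - W ξ : ℝ) ^ m : ℂ) * g ξ - Set.indicator {ξ : ℝ | W ξ = 0} g ξ)
        2 volume)
      Filter.atTop (nhds 0) := by
  refine tendsto_eLpNorm_zero_of_dominated two_ne_zero ofNat_ne_top (bound := fun ξ => 2 * ‖g ξ‖)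
    (fun m => ?_) (fun m => .of_forall fun ξ => ?_) (hg.norm.const_mul 2) (.of_forall fun ξ => ?_)
  · have hS : MeasurableSet {ξ : ℝ | W ξ = 0} := hWmeas (measurableSet_singleton 0)
    exact ((by fun_prop : Measurable fun ξ => ((1 - W ξ : ℝ) : ℂ) ^ m).aestronglyMeasurable.mul
      hg.1).sub (hg.1.indicator hS)
  · calc _ ≤ ‖((1 - W ξ : ℝ) ^ m : ℂ) * g ξ‖ + ‖Set.indicator {ξ : ℝ | W ξ = 0} g ξ‖ :=
          norm_sub_le _ _
      _ ≤ 1 * ‖g ξ‖ + ‖g ξ‖ := by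
          rw [norm_mul, ← Complex.ofReal_pow, Complex.norm_real, Real.norm_eq_abs]
          gcongr
          exacts [abs_one_sub_pow_le_one_of_mem_Icc (hW ξ) m, norm_indicator_le_norm_self _ _]
      _ = 2 * ‖g ξ‖ := by ring
  · have hlim := ((Complex.continuous_ofReal.tendsto _).comp
      (tendsto_one_sub_pow_of_mem_Icc (hW ξ))).mul_const (g ξ)
    have hind : (((if W ξ = 0 then 1 else 0 : ℝ) : ℂ)) * g ξ = {ξ : ℝ | W ξ = 0}.indicator g ξ := by
      split_ifs with h <;> simp [h]
    simpa [hind] using (hlim.congr fun m => by simp).sub_const ({ξ : ℝ | W ξ = 0}.indicator g ξ)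
end

section
/- Let g ∈ L²(ℝ), let W : ℝ → ℝ be measurable with 0 ≤ W(ξ) ≤ 1 for all ξ, and let N ≥ 1 be a natural number. Then ‖(1−W)^N·W·g‖_{L²} ≤ (N^N/(N+1)^{N+1})·‖g‖_{L²}. Consequently, given δ > 0, if N₀ ≥ 1 satisfies N₀^{N₀}/(N₀+1)^{N₀+1} < δ/‖g‖_{L²}, then ‖(1−W)^N·g − (1−W)^{N+1}·g‖_{L²} < δ for all N ≥ N₀. -/
/-!
Everything is pointwise: `t ↦ (1 - t)^N t` is maximal on `[0, 1]` at `t = 1/(N+1)`, with maximum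
`N^N/(N+1)^(N+1)`, so multiplication by `(1 - W)^N W` has `L²`-operator norm at most that value.
The bound follows by substituting `t = (1 + y)/(N+1)`, which turns the claim into
`(1 - y/N)^N (1 + y) ≤ e^{-y} e^{y} = 1`. Since `(1 - W)^N g - (1 - W)^(N+1) g = (1 - W)^N W g` and
`(1 - t)^N` decreases in `N`, the same bound for `N₀` controls every `N ≥ N₀`.
-/

open MeasureTheory

lemma one_sub_div_pow_mul_one_add_le_one {n : ℕ} (hn : n ≠ 0) {y : ℝ} (hy : -1 ≤ y)
    (hyn : y ≤ n) : (1 - y / n) ^ n * (1 + y) ≤ 1 := by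
  have hn' : (0 : ℝ) < n := by positivity
  have hbase : 0 ≤ 1 - y / n := sub_nonneg.mpr ((div_le_one hn').mpr hyn)
  calc (1 - y / n) ^ n * (1 + y) ≤ Real.exp (-(y / n)) ^ n * Real.exp y := by
        gcongr
        · linarith
        · exact Real.one_sub_le_exp_neg _
        · linarith [Real.add_one_le_exp y]
    _ = 1 := by
        rw [← Real.exp_nat_mul, ← Real.exp_add, mul_neg, mul_div_cancel₀ _ hn'.ne', neg_add_cancel,
          Real.exp_zero]

lemma one_sub_pow_mul_le {N : ℕ} (hN : N ≠ 0) {x : ℝ} (hx0 : 0 ≤ x) (hx1 : x ≤ 1) :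
    (1 - x) ^ N * x ≤ (N : ℝ) ^ N / (N + 1 : ℝ) ^ (N + 1) := by
  have hN' : (0 : ℝ) < N := by positivity
  set y : ℝ := (N + 1) * x - 1 with hy
  have key := one_sub_div_pow_mul_one_add_le_one hN (y := y) (by nlinarith) (by nlinarith)
  rw [le_div_iff₀ (by positivity)]
  have hscale : (N : ℝ) * (1 - y / N) = (N + 1) * (1 - x) := by
    rw [hy]
    field_simp
    ring
  calc (1 - x) ^ N * x * (N + 1 : ℝ) ^ (N + 1) = ((N + 1) * (1 - x)) ^ N * (1 + y) := by
        rw [mul_pow, hy]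
        ring
    _ = (N : ℝ) ^ N * ((1 - y / N) ^ N * (1 + y)) := by
        rw [← hscale, mul_pow]
        ring
    _ ≤ (N : ℝ) ^ N := mul_le_of_le_one_right (by positivity) key

lemma one_sub_pow_mul_le_of_le {N₀ N : ℕ} (hN₀ : N₀ ≠ 0) (h : N₀ ≤ N) {x : ℝ} (hx0 : 0 ≤ x)
    (hx1 : x ≤ 1) : (1 - x) ^ N * x ≤ (N₀ : ℝ) ^ N₀ / (N₀ + 1 : ℝ) ^ (N₀ + 1) :=
  (mul_le_mul_of_nonneg_right (pow_le_pow_of_le_one (by linarith) (by linarith) h) hx0).trans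
    (one_sub_pow_mul_le hN₀ hx0 hx1)

lemma eLpNorm_ofReal_mul_le {α 𝕜 : Type*} [MeasurableSpace α] [RCLike 𝕜] {μ : Measure α}
    {m : α → ℝ} {C : ℝ} (hm : ∀ x, |m x| ≤ C) (f : α → 𝕜) (p : ENNReal) :
    eLpNorm (fun x => (m x : 𝕜) * f x) p μ ≤ ENNReal.ofReal C * eLpNorm f p μ :=
  eLpNorm_le_mul_eLpNorm_of_ae_le_mul (ae_of_all _ fun x => by
    rw [norm_mul, RCLike.norm_ofReal]
    exact mul_le_mul_of_nonneg_right (hm x) (norm_nonneg _)) p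

/-- If `a = ∞`, then `a.toReal = 0` and `δ / 0 = 0`, so the hypothesis `c < δ / a.toReal` fails. -/
lemma ofReal_mul_lt_ofReal_of_lt_div {c δ : ℝ} {a : ENNReal} (hc : 0 ≤ c) (hδ : 0 < δ)
    (h : c < δ / a.toReal) : ENNReal.ofReal c * a < ENNReal.ofReal δ := by
  rcases eq_or_ne a 0 with rfl | ha0
  · simpa using hδ
  rcases eq_or_ne a ⊤ with rfl | hatop
  · simp at h
    linarith
  rw [← ENNReal.ofReal_toReal hatop, ← ENNReal.ofReal_mul hc]
  exact (ENNReal.ofReal_lt_ofReal_iff hδ).mpr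
    ((lt_div_iff₀ (ENNReal.toReal_pos ha0 hatop)).mp h)

theorem stmt7_general (g : ℝ → ℂ) (W : ℝ → ℝ)
    (hW : ∀ ξ : ℝ, W ξ ∈ Set.Icc (0 : ℝ) 1) :
    (∀ N : ℕ, 1 ≤ N →
      eLpNorm (fun ξ : ℝ => (((1 - W ξ) ^ N * W ξ : ℝ) : ℂ) * g ξ) 2 volume ≤
        ENNReal.ofReal ((N : ℝ) ^ N / (N + 1 : ℝ) ^ (N + 1)) * eLpNorm g 2 volume) ∧
    ∀ δ : ℝ, 0 < δ → ∀ N₀ : ℕ, 1 ≤ N₀ →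
      (N₀ : ℝ) ^ N₀ / (N₀ + 1 : ℝ) ^ (N₀ + 1) < δ / (eLpNorm g 2 volume).toReal →
      ∀ N : ℕ, N₀ ≤ N →
        eLpNorm (fun ξ : ℝ =>
            (((1 - W ξ) ^ N : ℝ) : ℂ) * g ξ - (((1 - W ξ) ^ (N + 1) : ℝ) : ℂ) * g ξ) 2 volume <
          ENNReal.ofReal δ := by
  have multiplier_le {N₀ N : ℕ} (hN₀ : 1 ≤ N₀) (h : N₀ ≤ N) (ξ : ℝ) :
      |(1 - W ξ) ^ N * W ξ| ≤ (N₀ : ℝ) ^ N₀ / (N₀ + 1 : ℝ) ^ (N₀ + 1) := by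
    obtain ⟨hW0, hW1⟩ := hW ξ
    rw [abs_of_nonneg (mul_nonneg (pow_nonneg (sub_nonneg.mpr hW1) N) hW0)]
    exact one_sub_pow_mul_le_of_le (by omega) h hW0 hW1
  refine ⟨fun N hN => eLpNorm_ofReal_mul_le (multiplier_le hN le_rfl) g 2,
    fun δ hδ N₀ hN₀ hsmall N hN => ?_⟩
  have hdiff : (fun ξ : ℝ =>
      (((1 - W ξ) ^ N : ℝ) : ℂ) * g ξ - (((1 - W ξ) ^ (N + 1) : ℝ) : ℂ) * g ξ) =
      fun ξ => (((1 - W ξ) ^ N * W ξ : ℝ) : ℂ) * g ξ := by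
    funext ξ
    push_cast
    ring
  rw [hdiff]
  exact (eLpNorm_ofReal_mul_le (multiplier_le hN₀ hN) g 2).trans_lt
    (ofReal_mul_lt_ofReal_of_lt_div (by positivity) hδ hsmall)

/-- For `g ∈ L²(ℝ)` and measurable `W : ℝ → ℝ` with values in `[0,1]` and `N ≥ 1`, one has
`‖(1-W)^N W g‖_{L²} ≤ (N^N/(N+1)^(N+1)) ‖g‖_{L²}`. Consequently, given `δ > 0`, if `N₀ ≥ 1`
satisfies `N₀^N₀/(N₀+1)^(N₀+1) < δ / ‖g‖_{L²}` then
`‖(1-W)^N g - (1-W)^(N+1) g‖_{L²} < δ` for all `N ≥ N₀`. -/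
theorem stmt7 (g : ℝ → ℂ) (hg : MemLp g 2 volume) (W : ℝ → ℝ) (hWmeas : Measurable W)
    (hW : ∀ ξ : ℝ, W ξ ∈ Set.Icc (0 : ℝ) 1) :
    (∀ N : ℕ, 1 ≤ N →
      eLpNorm (fun ξ : ℝ => (((1 - W ξ) ^ N * W ξ : ℝ) : ℂ) * g ξ) 2 volume ≤
        ENNReal.ofReal ((N : ℝ) ^ N / (N + 1 : ℝ) ^ (N + 1)) * eLpNorm g 2 volume) ∧
    ∀ δ : ℝ, 0 < δ → ∀ N₀ : ℕ, 1 ≤ N₀ →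
      (N₀ : ℝ) ^ N₀ / (N₀ + 1 : ℝ) ^ (N₀ + 1) < δ / (eLpNorm g 2 volume).toReal →
      ∀ N : ℕ, N₀ ≤ N →
        eLpNorm (fun ξ : ℝ =>
            (((1 - W ξ) ^ N : ℝ) : ℂ) * g ξ - (((1 - W ξ) ^ (N + 1) : ℝ) : ℂ) * g ξ) 2 volume <
          ENNReal.ofReal δ :=
  stmt7_general g W hW
end

section
/- Let g ∈ L²(ℝ), let W : ℝ → ℝ be measurable with 0 ≤ W(ξ) ≤ 1 for all ξ, let N ≥ 1 and γ ∈ (0,1), and let I = {ξ ∈ ℝ : W(ξ) ≤ 1 − (1−γ)^{1/N}}. Define F^{SC} = (1−W)^N·g, and F^{TH} equal to g on I and equal to (1−W)^N·g on ℝ∖I. Then ‖F^{TH} − F^{SC}‖_{L²} ≤ γ·‖g‖_{L²}. -/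
open scoped Classical

open MeasureTheory

/-! On `I` the multiplier `(1 - W)^N` is at least `1 - γ`, so replacing it by `1` changes the
Fourier transform by a factor of modulus at most `γ`; off `I` nothing changes. The estimate is
therefore pointwise, and integrates to the `L²` bound. -/

theorem le_pow_of_rpow_one_div_le {b x : ℝ} {N : ℕ} (hb : 0 ≤ b) (hx : 0 ≤ x) (hN : N ≠ 0)
    (h : b ^ (1 / (N : ℝ)) ≤ x) : b ≤ x ^ N := by
  rwa [one_div, Real.rpow_inv_le_iff_of_pos hb hx (by positivity), Real.rpow_natCast] at h

theorem abs_one_sub_one_sub_pow_le {w γ : ℝ} {N : ℕ} (hw : w ∈ Set.Icc (0 : ℝ) 1) (hN : N ≠ 0)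
    (hγ : γ ≤ 1) (h : w ≤ 1 - (1 - γ) ^ (1 / (N : ℝ))) : |1 - (1 - w) ^ N| ≤ γ := by
  have hpow_le_one : (1 - w) ^ N ≤ 1 := pow_le_one₀ (by linarith [hw.2]) (by linarith [hw.1])
  have hle_pow : 1 - γ ≤ (1 - w) ^ N :=
    le_pow_of_rpow_one_div_le (by linarith) (by linarith [hw.2]) hN (by linarith)
  rw [abs_of_nonneg (sub_nonneg.2 hpow_le_one)]
  linarith

theorem stmt8_general (g : ℝ → ℂ) (W : ℝ → ℝ)
    (hW : ∀ ξ : ℝ, W ξ ∈ Set.Icc (0 : ℝ) 1) (N : ℕ) (hN : 1 ≤ N)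
    (γ : ℝ) (hγ : γ ∈ Set.Ioo (0 : ℝ) 1)
    (I : Set ℝ) (hI : I = {ξ : ℝ | W ξ ≤ 1 - (1 - γ) ^ (1 / (N : ℝ))})
    (FSC FTH : ℝ → ℂ)
    (hFSC : ∀ ξ : ℝ, FSC ξ = (((1 - W ξ) ^ N : ℝ) : ℂ) * g ξ)
    (hFTH : ∀ ξ : ℝ, FTH ξ = if ξ ∈ I then g ξ else (((1 - W ξ) ^ N : ℝ) : ℂ) * g ξ) :
    eLpNorm (FTH - FSC) 2 volume ≤ ENNReal.ofReal γ * eLpNorm g 2 volume := by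
  refine eLpNorm_le_mul_eLpNorm_of_ae_le_mul (Filter.Eventually.of_forall fun ξ => ?_) 2
  rw [Pi.sub_apply, hFTH, hFSC]
  split_ifs with hξ
  · have hdiff : g ξ - (((1 - W ξ) ^ N : ℝ) : ℂ) * g ξ = ((1 - (1 - W ξ) ^ N : ℝ) : ℂ) * g ξ := by
      push_cast
      ring
    rw [hI] at hξ
    rw [hdiff, norm_mul, Complex.norm_real, Real.norm_eq_abs]
    exact mul_le_mul_of_nonneg_right
      (abs_one_sub_one_sub_pow_le (hW ξ) (by omega) hγ.2.le hξ) (norm_nonneg _)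
  · rw [sub_self, norm_zero]
    exact mul_nonneg hγ.1.le (norm_nonneg _)

/-- Comparison of the stopping-criterion IMF `F^SC = (1-W)^N g` and the thresholded IMF
`F^TH` (equal to `g` on `I = {ξ | W ξ ≤ 1 - (1-γ)^(1/N)}` and to `(1-W)^N g` elsewhere):
`‖F^TH - F^SC‖_{L²} ≤ γ ‖g‖_{L²}`. -/
theorem stmt8 (g : ℝ → ℂ) (hg : MemLp g 2 volume) (W : ℝ → ℝ) (hWmeas : Measurable W)
    (hW : ∀ ξ : ℝ, W ξ ∈ Set.Icc (0 : ℝ) 1) (N : ℕ) (hN : 1 ≤ N)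
    (γ : ℝ) (hγ : γ ∈ Set.Ioo (0 : ℝ) 1)
    (I : Set ℝ) (hI : I = {ξ : ℝ | W ξ ≤ 1 - (1 - γ) ^ (1 / (N : ℝ))})
    (FSC FTH : ℝ → ℂ)
    (hFSC : ∀ ξ : ℝ, FSC ξ = (((1 - W ξ) ^ N : ℝ) : ℂ) * g ξ)
    (hFTH : ∀ ξ : ℝ, FTH ξ = if ξ ∈ I then g ξ else (((1 - W ξ) ^ N : ℝ) : ℂ) * g ξ) :
    eLpNorm (FTH - FSC) 2 volume ≤ ENNReal.ofReal γ * eLpNorm g 2 volume :=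
  stmt8_general g W hW N hN γ hγ I hI FSC FTH hFSC hFTH
end

section
/- Let n ≥ 3 be odd and let c : ZMod n → ℝ satisfy: c(k) ≥ 0 for all k, Σ_k c(k) = 1, c(−k) = c(k) for all k, c(0) < 1, and c(1) > 0. For j = 0, 1, …, n−1 let λ_j = c(0) + 2·Σ_{k=1}^{(n−1)/2} c(k)·cos(2π j k / n) be the eigenvalues of the circulant matrix with symbol c. Then λ_0 = 1 and, for every j ≠ 0, −1 < λ_j < 1. In particular 1 is an eigenvalue of multiplicity one and all other eigenvalues are real and strictly less than one in absolute value. -/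
open scoped Matrix

private lemma zmod_sum_range (n : ℕ) [NeZero n] (g : ZMod n → ℝ) :
    ∑ k : ZMod n, g k = ∑ i ∈ Finset.range n, g (i : ZMod n) := by
  refine Finset.sum_nbij' (fun k => k.val) (fun i => (i : ZMod n)) ?_ ?_ ?_ ?_ ?_ <;>
    simp [ZMod.val_lt, ZMod.natCast_val, ZMod.val_cast_of_lt, Finset.mem_range]
  · intro a ha; exact Nat.mod_eq_of_lt ha

private lemma key_sum (n : ℕ) [NeZero n] (hn : 3 ≤ n) (hodd : Odd n) (g : ZMod n → ℝ)
    (hsym : ∀ k : ZMod n, g (-k) = g k) :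
    ∑ k : ZMod n, g k = g 0 + 2 * ∑ k ∈ Finset.Icc 1 ((n - 1) / 2), g (k : ZMod n) := by
  obtain ⟨m, hm⟩ := hodd
  have hM : (n - 1) / 2 = m := by omega
  rw [zmod_sum_range, hM]
  have h1 : Finset.range n = insert 0 (Finset.Icc 1 (n - 1)) := by
    ext i; simp [Finset.mem_Icc]; omega
  have h2 : Finset.Icc 1 (n - 1) = Finset.Icc 1 m ∪ Finset.Icc (m + 1) (n - 1) := by
    ext i; simp [Finset.mem_Icc]; omega
  have hdisj : Disjoint (Finset.Icc 1 m) (Finset.Icc (m + 1) (n - 1)) := by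
    rw [Finset.disjoint_left]; intro a ha hb
    simp [Finset.mem_Icc] at ha hb; omega
  rw [h1, Finset.sum_insert (by simp), h2, Finset.sum_union hdisj]
  have h3 : ∑ i ∈ Finset.Icc (m + 1) (n - 1), g (i : ZMod n)
      = ∑ i ∈ Finset.Icc 1 m, g (i : ZMod n) := by
    refine Finset.sum_nbij' (fun k => n - k) (fun k => n - k) ?_ ?_ ?_ ?_ ?_ <;>
      simp only [Finset.mem_Icc] <;> try (intro a ha; omega)
    intro a ha
    have : ((n - a : ℕ) : ZMod n) = -(a : ZMod n) := by
      have h : (a : ℕ) ≤ n := by omega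
      push_cast [Nat.cast_sub h]
      simp
    rw [this, hsym]
  rw [h3]; push_cast; ring

/-- For `n ≥ 3` odd and a symbol `c : ZMod n → ℝ` that is nonnegative, sums to one,
is symmetric, with `c 0 < 1` and `c 1 > 0`, the eigenvalues
`λ_j = c 0 + 2 Σ_{k=1}^{(n-1)/2} c k cos(2π j k / n)` of the circulant matrix with symbol
`c` satisfy `λ_0 = 1` and `-1 < λ_j < 1` for every `j ≠ 0`; in particular `1` is an
eigenvalue of multiplicity one (i.e. `λ_j = 1` iff `j = 0`). -/
theorem stmt13 (n : ℕ) [NeZero n] (hn : 3 ≤ n) (hodd : Odd n) (c : ZMod n → ℝ)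
    (hnn : ∀ k : ZMod n, 0 ≤ c k) (hsum : ∑ k : ZMod n, c k = 1)
    (hsym : ∀ k : ZMod n, c (-k) = c k) (hc0 : c 0 < 1) (hc1 : 0 < c 1)
    (lam : ZMod n → ℝ)
    (hlam : ∀ j : ZMod n, lam j = c 0 + 2 * ∑ k ∈ Finset.Icc 1 ((n - 1) / 2),
      c (k : ZMod n) * Real.cos (2 * Real.pi * (j.val : ℝ) * (k : ℝ) / (n : ℝ))) :
    lam 0 = 1 ∧
    (∀ j : ZMod n, j ≠ 0 → -1 < lam j ∧ lam j < 1) ∧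
    ∀ j : ZMod n, lam j = 1 ↔ j = 0 := by
  set M := (n - 1) / 2 with hMdef
  have hM1 : 1 ≤ M := by omega
  have hnpos : (0 : ℝ) < n := by positivity
  have hkey : c 0 + 2 * ∑ k ∈ Finset.Icc 1 M, c (k : ZMod n) = 1 := by
    rw [← key_sum n hn hodd c hsym, hsum]
  have hlam0 : lam 0 = 1 := by
    rw [hlam 0, ← hkey]
    simp
  have hmain : ∀ j : ZMod n, j ≠ 0 → -1 < lam j ∧ lam j < 1 := by
    intro j hj
    set v : ℕ := j.val with hv
    have hv0 : 0 < v := by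
      rcases Nat.pos_of_ne_zero (fun h => hj (by rwa [← ZMod.val_eq_zero j])) with h
      exact h
    have hvn : v < n := ZMod.val_lt j
    have hc1lt : Real.cos (2 * Real.pi * v * (1 : ℝ) / n) < 1 := by
      refine lt_of_le_of_ne (Real.cos_le_one _) (fun h => ?_)
      rw [Real.cos_eq_one_iff] at h
      obtain ⟨m, hm⟩ := h
      have hπ : (0:ℝ) < Real.pi := Real.pi_pos
      have hmn : (m : ℝ) * n = v := by
        field_simp at hm
        nlinarith [hm]
      have hmn' : (m : ℤ) * n = v := by exact_mod_cast hmn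
      rcases le_or_gt m 0 with h' | h'
      · nlinarith [hmn', (by exact_mod_cast hv0 : (0:ℤ) < (v:ℤ)),
          (by exact_mod_cast hvn : (v:ℤ) < (n:ℤ))]
      · nlinarith [hmn', (by exact_mod_cast hv0 : (0:ℤ) < (v:ℤ)),
          (by exact_mod_cast hvn : (v:ℤ) < (n:ℤ)), h']
    have hc1gt : -1 < Real.cos (2 * Real.pi * v * (1 : ℝ) / n) := by
      refine lt_of_le_of_ne (Real.neg_one_le_cos _) (fun h => ?_)
      rw [eq_comm, Real.cos_eq_neg_one_iff] at h
      obtain ⟨m, hm⟩ := h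
      have hπ : Real.pi ≠ 0 := Real.pi_ne_zero
      have hmn : ((n : ℝ)) * (2 * m + 1) = 2 * v := by
        field_simp at hm
        nlinarith [hm, Real.pi_pos]
      have hmn' : (n : ℤ) * (2 * m + 1) = 2 * v := by exact_mod_cast hmn
      have hoddZ : Odd ((n : ℤ) * (2 * m + 1)) :=
        (Int.odd_coe_nat n |>.mpr hodd).mul (odd_two_mul_add_one m)
      rw [hmn'] at hoddZ
      exact (Int.not_odd_iff_even.mpr (even_two_mul _)) hoddZ
    -- bounds on the sum
    have hle : ∀ k ∈ Finset.Icc 1 M,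
        c (k : ZMod n) * Real.cos (2 * Real.pi * v * (k : ℝ) / n) ≤ c (k : ZMod n) := by
      intro k hk
      calc c (k : ZMod n) * Real.cos (2 * Real.pi * v * (k : ℝ) / n)
          ≤ c (k : ZMod n) * 1 := by
            exact mul_le_mul_of_nonneg_left (Real.cos_le_one _) (hnn _)
        _ = c (k : ZMod n) := mul_one _
    have hge : ∀ k ∈ Finset.Icc 1 M,
        -(c (k : ZMod n)) ≤ c (k : ZMod n) * Real.cos (2 * Real.pi * v * (k : ℝ) / n) := by
      intro k hk
      have := mul_le_mul_of_nonneg_left (Real.neg_one_le_cos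
        (2 * Real.pi * v * (k : ℝ) / n)) (hnn ((k : ZMod n)))
      linarith
    have h1mem : (1 : ℕ) ∈ Finset.Icc 1 M := by simp [hM1]
    have hcast1 : ((1 : ℕ) : ZMod n) = 1 := by norm_cast
    have hstrictlt :
        ∑ k ∈ Finset.Icc 1 M, c (k : ZMod n) * Real.cos (2 * Real.pi * v * (k : ℝ) / n)
        < ∑ k ∈ Finset.Icc 1 M, c (k : ZMod n) := by
      refine Finset.sum_lt_sum hle ⟨1, h1mem, ?_⟩
      push_cast
      nlinarith [hc1lt, hc1]
    have hstrictgt :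
        ∑ k ∈ Finset.Icc 1 M, (-(c (k : ZMod n)))
        < ∑ k ∈ Finset.Icc 1 M, c (k : ZMod n) * Real.cos (2 * Real.pi * v * (k : ℝ) / n) := by
      refine Finset.sum_lt_sum hge ⟨1, h1mem, ?_⟩
      push_cast
      nlinarith [hc1gt, hc1]
    rw [Finset.sum_neg_distrib] at hstrictgt
    have hc0nn : 0 ≤ c 0 := hnn 0
    constructor
    · rw [hlam j, ← hv]
      linarith
    · rw [hlam j, ← hv]
      linarith
  refine ⟨hlam0, hmain, fun j => ⟨fun h => ?_, fun h => h ▸ hlam0⟩⟩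
  by_contra hj
  exact absurd h (ne_of_lt (hmain j hj).2)
end

section
/- Let n ≥ 3 be odd and let c : ZMod n → ℝ satisfy: c(k) ≥ 0, Σ_k c(k) = 1, c(−k) = c(k), c(0) < 1, and c(1) > 0. Let W̃ be the circulant matrix with symbol c and let W = W̃² = W̃ᵀ·W̃. Then W is a symmetric circulant matrix whose eigenvalues are the squares λ_j² of the eigenvalues λ_j of W̃; they satisfy λ_0² = 1 and 0 ≤ λ_j² < 1 for every j ≠ 0. In particular the spectrum of W is contained in [0,1] and 1 is an eigenvalue of W of multiplicity one. -/
/-!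
The Fourier modes `q ↦ ψ(-j q)`, with `ψ = ZMod.stdAddChar`, are eigenvectors of every circulant
matrix; for the symmetric symbol `c` the eigenvalue `∑ₖ c k ψ(j k)` is real and, pairing `k` with
`-k` (possible since `n` is odd), equals `λ_j`. Hence `W = W̃²` has eigenvalues `λ_j²`, and since
the Fourier transform is injective, `W` (being symmetric) has no others. Finally `λ_0 = ∑ c = 1`,
while for `j ≠ 0`, `λ_j = ∑ₖ c k Re ψ(j k)` is an average of numbers in `[-1, 1]` in which
`Re ψ(j) ∈ (-1, 1)` has positive weight `c 1`: `ψ(j) = ±1` would force `ψ(2j) = 1`, i.e. `2j = 0`,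
impossible for `n` odd.
-/

open scoped Matrix
open Finset

theorem Matrix.circulant_mulVec_addChar {G R : Type*} [AddCommGroup G] [Fintype G] [CommRing R]
    (c : G → R) (ψ : AddChar G R) :
    circulant c *ᵥ ψ = (∑ k, c k * ψ (-k)) • ⇑ψ := by
  ext p
  simp only [mulVec, dotProduct, circulant_apply, Pi.smul_apply, smul_eq_mul, sum_mul]
  refine Fintype.sum_equiv (Equiv.subLeft p) _ _ fun q => ?_
  rw [Equiv.subLeft_apply, mul_assoc, ← AddChar.map_add_eq_mul, neg_sub, sub_add_cancel]

theorem Matrix.IsSymm.eq_of_mulVec_eq_smul {ι K : Type*} [Fintype ι] [Field K]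
    {M : Matrix ι ι K} (hM : M.IsSymm) {v w : ι → K} {μ ν : K}
    (hv : M *ᵥ v = μ • v) (hw : M *ᵥ w = ν • w) (hwv : w ⬝ᵥ v ≠ 0) : μ = ν := by
  have h : μ * (w ⬝ᵥ v) = ν * (w ⬝ᵥ v) := by
    calc μ * (w ⬝ᵥ v) = w ⬝ᵥ (M *ᵥ v) := by rw [hv, dotProduct_smul, smul_eq_mul]
      _ = (Mᵀ *ᵥ w) ⬝ᵥ v := by rw [dotProduct_mulVec, ← vecMul_transpose, transpose_transpose]
      _ = ν * (w ⬝ᵥ v) := by rw [hM.eq, hw, smul_dotProduct, smul_eq_mul]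
  exact mul_right_cancel₀ hwv h

theorem Matrix.exists_mulVec_eq_smul_of_mem_spectrum {ι K : Type*} [Fintype ι] [DecidableEq ι]
    [Field K] {M : Matrix ι ι K} {μ : K} (hμ : μ ∈ spectrum K M) : ∃ v ≠ 0, M *ᵥ v = μ • v := by
  rw [← Matrix.spectrum_toLin', ← Module.End.hasEigenvalue_iff_mem_spectrum] at hμ
  obtain ⟨v, hv⟩ := hμ.exists_hasEigenvector
  exact ⟨v, hv.2, by simpa using hv.apply_eq_smul⟩

theorem Complex.abs_re_lt_one_of_norm_eq_one {z : ℂ} (hz : ‖z‖ = 1) (hz2 : z ^ 2 ≠ 1) :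
    |z.re| < 1 := by
  rw [← hz, Complex.abs_re_lt_norm]
  intro him
  have hre : z = z.re := Complex.ext rfl (by simp [him])
  rw [hre, Complex.norm_real, Real.norm_eq_abs] at hz
  rw [hre, ← Complex.ofReal_pow, ← sq_abs, hz] at hz2
  exact hz2 (by norm_num)

theorem Finset.abs_sum_mul_lt_one {ι : Type*} {s : Finset ι} {w x : ι → ℝ}
    (hw : ∀ i ∈ s, 0 ≤ w i) (hsum : ∑ i ∈ s, w i = 1) (hx : ∀ i ∈ s, |x i| ≤ 1)
    {i : ι} (hi : i ∈ s) (hwi : 0 < w i) (hxi : |x i| < 1) : |∑ i ∈ s, w i * x i| < 1 :=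
  calc |∑ i ∈ s, w i * x i| ≤ ∑ i ∈ s, w i * |x i| := by
        refine (abs_sum_le_sum_abs _ _).trans_eq (sum_congr rfl fun k hk => ?_)
        rw [abs_mul, abs_of_nonneg (hw k hk)]
    _ < ∑ i ∈ s, w i := by
        refine sum_lt_sum (fun k hk => mul_le_of_le_one_right (hw k hk) (hx k hk))
          ⟨i, hi, mul_lt_of_lt_one_right hwi hxi⟩
    _ = 1 := hsum

namespace ZMod
variable {n : ℕ} [NeZero n]

theorem sum_eq_sum_range {M : Type*} [AddCommMonoid M] (f : ZMod n → M) :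
    ∑ k, f k = ∑ i ∈ range n, f i :=
  sum_nbij' val (fun i => (i : ZMod n)) (fun k _ => mem_range.2 k.val_lt) (fun _ _ => mem_univ _)
    (fun k _ => natCast_zmod_val k) (fun _ hi => val_cast_of_lt (mem_range.1 hi))
    (fun k _ => by rw [natCast_zmod_val])

theorem sum_eq_add_sum_Icc_add_neg (hn : Odd n) {M : Type*} [AddCommMonoid M] (f : ZMod n → M) :
    ∑ k, f k = f 0 + ∑ k ∈ Icc 1 ((n - 1) / 2), (f k + f (-k)) := by
  obtain ⟨m, rfl⟩ := hn
  have hm : (2 * m + 1 - 1) / 2 = m := by omega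
  have hreflect : ∑ k ∈ Ico 1 (m + 1), f (-(k : ZMod (2 * m + 1)))
      = ∑ i ∈ Ico (m + 1) (2 * m + 1), f i := by
    refine sum_nbij' (fun k => 2 * m + 1 - k) (fun i => 2 * m + 1 - i) ?_ ?_ ?_ ?_ ?_ <;>
      intro k hk <;> simp only [mem_Ico] at hk ⊢
    · omega
    · omega
    · omega
    · omega
    · rw [Nat.cast_sub (by omega), natCast_self, zero_sub]
  rw [hm, ← Ico_add_one_right_eq_Icc, sum_add_distrib, hreflect, sum_eq_sum_range,
    range_eq_Ico, sum_eq_sum_Ico_succ_bot (by omega), Nat.cast_zero,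
    sum_Ico_consecutive _ (by omega) (by omega)]

theorem stdAddChar_mulShift_neg_apply (j q : ZMod n) :
    stdAddChar.mulShift (-j) q
      = Complex.exp (-2 * Real.pi * Complex.I * (j.val : ℂ) * (q.val : ℂ) / (n : ℂ)) := by
  have hjq : -j * q = ((-(j.val * q.val : ℕ) : ℤ) : ZMod n) := by
    push_cast
    rw [natCast_zmod_val, natCast_zmod_val, neg_mul]
  rw [AddChar.mulShift_apply, hjq, stdAddChar_coe]
  push_cast
  ring_nf

theorem stdAddChar_add_stdAddChar_neg (j : ZMod n) (k : ℕ) :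
    stdAddChar (j * (k : ZMod n)) + stdAddChar (-(j * (k : ZMod n)))
      = 2 * (Real.cos (2 * Real.pi * j.val * k / n) : ℂ) := by
  have hjk : j * (k : ZMod n) = ((j.val * k : ℕ) : ℤ) := by
    push_cast
    rw [natCast_zmod_val]
  rw [hjk, ← Int.cast_neg, stdAddChar_coe, stdAddChar_coe, Complex.ofReal_cos, Complex.two_cos]
  push_cast
  ring_nf

theorem sum_mul_stdAddChar_of_even (hn : Odd n) {c : ZMod n → ℝ} (hc : c.Even) (j : ZMod n) :
    ∑ k, (c k : ℂ) * stdAddChar (j * k)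
      = ((c 0 + 2 * ∑ k ∈ Icc 1 ((n - 1) / 2),
          c (k : ZMod n) * Real.cos (2 * Real.pi * j.val * k / n) : ℝ) : ℂ) := by
  rw [sum_eq_add_sum_Icc_add_neg hn]
  simp only [show ∀ k, c (-k) = c k from hc, mul_zero, AddChar.map_zero_eq_one, mul_one, mul_neg,
    ← mul_add, stdAddChar_add_stdAddChar_neg]
  push_cast
  rw [mul_sum]
  exact congrArg _ (sum_congr rfl fun k _ => by ring)

theorem abs_re_stdAddChar_lt_one (hn : Odd n) {j : ZMod n} (hj : j ≠ 0) :
    |(stdAddChar j).re| < 1 := by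
  have h2 : IsUnit (2 : ZMod n) := by
    simpa using (unitOfCoprime 2 (Nat.coprime_two_left.2 hn)).isUnit
  refine Complex.abs_re_lt_one_of_norm_eq_one (Circle.norm_coe _) fun h => hj ?_
  rw [← h2.mul_right_eq_zero]
  apply injective_stdAddChar (N := n)
  rwa [← Nat.cast_ofNat, ← nsmul_eq_mul, AddChar.map_nsmul_eq_pow, AddChar.map_zero_eq_one]

theorem abs_sum_mul_re_stdAddChar_lt_one (hn : Odd n) {c : ZMod n → ℝ} (hc : ∀ k, 0 ≤ c k)
    (hsum : ∑ k, c k = 1) (hc1 : 0 < c 1) {j : ZMod n} (hj : j ≠ 0) :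
    |∑ k, c k * (stdAddChar (j * k)).re| < 1 :=
  abs_sum_mul_lt_one (fun k _ => hc k) hsum
    (fun k _ => (Complex.abs_re_le_norm _).trans_eq (Circle.norm_coe _)) (mem_univ 1) hc1
    (by rw [mul_one]; exact abs_re_stdAddChar_lt_one hn hj)

theorem circulant_mulVec_stdAddChar_mulShift_neg (c : ZMod n → ℂ) (j : ZMod n) :
    Matrix.circulant c *ᵥ stdAddChar.mulShift (-j)
      = (∑ k, c k * stdAddChar (j * k)) • ⇑(stdAddChar.mulShift (-j)) := by
  simp only [Matrix.circulant_mulVec_addChar, AddChar.mulShift_apply, neg_mul_neg]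

/-- The Fourier coefficient `𝓕 v j` of an eigenvector `v` is its pairing with the `j`-th mode,
which is a left eigenvector by symmetry; some coefficient is nonzero. -/
theorem exists_eq_of_mem_spectrum_of_isSymm {M : Matrix (ZMod n) (ZMod n) ℂ} (hM : M.IsSymm)
    {ev : ZMod n → ℂ}
    (hev : ∀ j, M *ᵥ stdAddChar.mulShift (-j) = ev j • ⇑(stdAddChar.mulShift (-j)))
    {μ : ℂ} (hμ : μ ∈ spectrum ℂ M) : ∃ j, μ = ev j := by
  obtain ⟨v, hv0, hv⟩ := Matrix.exists_mulVec_eq_smul_of_mem_spectrum hμ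
  obtain ⟨j, hj⟩ := Function.ne_iff.1 ((dft.map_ne_zero_iff).2 hv0)
  refine ⟨j, hM.eq_of_mulVec_eq_smul hv (hev j) ?_⟩
  simpa [dft_apply, dotProduct, mul_comm j] using hj

end ZMod

theorem stmt14_general (n : ℕ) [NeZero n] (hodd : Odd n) (c : ZMod n → ℝ)
    (hnn : ∀ k : ZMod n, 0 ≤ c k) (hsum : ∑ k : ZMod n, c k = 1)
    (hsym : ∀ k : ZMod n, c (-k) = c k) (hc1 : 0 < c 1)
    (Wt W : Matrix (ZMod n) (ZMod n) ℝ)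
    (hWt : Wt = Matrix.circulant c) (hWdef : W = Wt * Wt)
    (u : ZMod n → ZMod n → ℂ)
    (hu : ∀ j q : ZMod n,
      u j q = Complex.exp (-2 * Real.pi * Complex.I * (j.val : ℂ) * (q.val : ℂ) / (n : ℂ)))
    (lam : ZMod n → ℝ)
    (hlam : ∀ j : ZMod n, lam j = c 0 + 2 * ∑ k ∈ Finset.Icc 1 ((n - 1) / 2),
      c (k : ZMod n) * Real.cos (2 * Real.pi * (j.val : ℝ) * (k : ℝ) / (n : ℝ))) :
    W = Wtᵀ * Wt ∧
    W.IsSymm ∧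
    (∃ d : ZMod n → ℝ, W = Matrix.circulant d) ∧
    (∀ j : ZMod n,
      (W.map (fun x : ℝ => (x : ℂ))).mulVec (u j) = (((lam j) ^ 2 : ℝ) : ℂ) • u j) ∧
    (∀ μ : ℂ, μ ∈ spectrum ℂ (W.map (fun x : ℝ => (x : ℂ))) →
      ∃ j : ZMod n, μ = (((lam j) ^ 2 : ℝ) : ℂ)) ∧
    (lam 0) ^ 2 = 1 ∧
    (∀ j : ZMod n, j ≠ 0 → 0 ≤ (lam j) ^ 2 ∧ (lam j) ^ 2 < 1) ∧
    ∀ j : ZMod n, (lam j) ^ 2 = 1 ↔ j = 0 := by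
  have hu' : ∀ j, u j = ⇑(ZMod.stdAddChar.mulShift (-j)) := fun j =>
    funext fun q => by rw [hu, ZMod.stdAddChar_mulShift_neg_apply]
  have hlamC : ∀ j : ZMod n, ∑ k, (c k : ℂ) * ZMod.stdAddChar (j * k) = lam j := fun j => by
    rw [ZMod.sum_mul_stdAddChar_of_even hodd hsym, hlam]
  have hWtT : Wtᵀ = Wt := by
    rw [hWt, Matrix.transpose_circulant]
    exact congrArg _ (funext hsym)
  have hWsymm : W.IsSymm := by rw [Matrix.IsSymm, hWdef, Matrix.transpose_mul, hWtT]
  have heigWt : ∀ j, Wt.map (fun x : ℝ => (x : ℂ)) *ᵥ u j = (lam j : ℂ) • u j := fun j => by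
    rw [hWt, Matrix.map_circulant, hu', ZMod.circulant_mulVec_stdAddChar_mulShift_neg, ← hlamC j]
  have hWmap : W.map (fun x : ℝ => (x : ℂ))
      = Wt.map (fun x : ℝ => (x : ℂ)) * Wt.map (fun x : ℝ => (x : ℂ)) :=
    hWdef ▸ Matrix.map_mul (f := Complex.ofRealHom)
  have heigW : ∀ j, W.map (fun x : ℝ => (x : ℂ)) *ᵥ u j = ((lam j ^ 2 : ℝ) : ℂ) • u j :=
    fun j => by
      rw [hWmap, ← Matrix.mulVec_mulVec, heigWt, Matrix.mulVec_smul, heigWt, smul_smul,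
        Complex.ofReal_pow, sq]
  have hlam0 : lam 0 = 1 := by
    have h := hlamC 0
    simp only [zero_mul, AddChar.map_zero_eq_one, mul_one, ← Complex.ofReal_sum, hsum] at h
    exact_mod_cast h.symm
  have hlt : ∀ j ≠ 0, lam j ^ 2 < 1 := fun j hj => by
    rw [sq_lt_one_iff_abs_lt_one]
    have hre := congrArg Complex.re (hlamC j)
    simp only [Complex.re_sum, Complex.re_ofReal_mul, Complex.ofReal_re] at hre
    exact hre ▸ ZMod.abs_sum_mul_re_stdAddChar_lt_one hodd hnn hsum hc1 hj
  refine ⟨by rw [hWdef, hWtT], hWsymm, ⟨_, by rw [hWdef, hWt, Matrix.circulant_mul]⟩, heigW,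
    fun μ hμ => ZMod.exists_eq_of_mem_spectrum_of_isSymm (hWsymm.map _)
      (fun j => hu' j ▸ heigW j) hμ,
    by rw [hlam0, one_pow], fun j hj => ⟨sq_nonneg _, hlt j hj⟩,
    fun j => ⟨fun h => by_contra fun hj => (hlt j hj).ne h, fun h => by rw [h, hlam0, one_pow]⟩⟩

/-- For `n ≥ 3` odd and a symbol `c : ZMod n → ℝ` that is nonnegative, sums to one, is
symmetric, with `c 0 < 1` and `c 1 > 0`, let `W̃` be the circulant matrix with symbol `c`
and `W = W̃² = W̃ᵀ W̃`. Then `W` is a symmetric circulant matrix, its eigenvalues are the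
squares `λ_j²` of the eigenvalues `λ_j` of `W̃` (with eigenvectors `(u_j)_q = e^{-2πijq/n}`),
they satisfy `λ_0² = 1` and `0 ≤ λ_j² < 1` for `j ≠ 0`; in particular the spectrum of `W`
is contained in `[0,1]` and `1` is an eigenvalue of `W` of multiplicity one. -/
theorem stmt14 (n : ℕ) [NeZero n] (hn : 3 ≤ n) (hodd : Odd n) (c : ZMod n → ℝ)
    (hnn : ∀ k : ZMod n, 0 ≤ c k) (hsum : ∑ k : ZMod n, c k = 1)
    (hsym : ∀ k : ZMod n, c (-k) = c k) (hc0 : c 0 < 1) (hc1 : 0 < c 1)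
    (Wt W : Matrix (ZMod n) (ZMod n) ℝ)
    (hWt : Wt = Matrix.circulant c) (hWdef : W = Wt * Wt)
    (u : ZMod n → ZMod n → ℂ)
    (hu : ∀ j q : ZMod n,
      u j q = Complex.exp (-2 * Real.pi * Complex.I * (j.val : ℂ) * (q.val : ℂ) / (n : ℂ)))
    (lam : ZMod n → ℝ)
    (hlam : ∀ j : ZMod n, lam j = c 0 + 2 * ∑ k ∈ Finset.Icc 1 ((n - 1) / 2),
      c (k : ZMod n) * Real.cos (2 * Real.pi * (j.val : ℝ) * (k : ℝ) / (n : ℝ))) :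
    W = Wtᵀ * Wt ∧
    W.IsSymm ∧
    (∃ d : ZMod n → ℝ, W = Matrix.circulant d) ∧
    (∀ j : ZMod n,
      (W.map (fun x : ℝ => (x : ℂ))).mulVec (u j) = (((lam j) ^ 2 : ℝ) : ℂ) • u j) ∧
    (∀ μ : ℂ, μ ∈ spectrum ℂ (W.map (fun x : ℝ => (x : ℂ))) →
      ∃ j : ZMod n, μ = (((lam j) ^ 2 : ℝ) : ℂ)) ∧
    (lam 0) ^ 2 = 1 ∧
    (∀ j : ZMod n, j ≠ 0 → 0 ≤ (lam j) ^ 2 ∧ (lam j) ^ 2 < 1) ∧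
    ∀ j : ZMod n, (lam j) ^ 2 = 1 ↔ j = 0 :=
  stmt14_general n hodd c hnn hsum hsym hc1 Wt W hWt hWdef u hu lam hlam
end

section
/- Let n ≥ 3 be odd and let c : ZMod n → ℝ satisfy: c(k) ≥ 0, Σ_k c(k) = 1, c(−k) = c(k), c(0) < 1, and c(1) > 0, and let W be the circulant matrix with symbol c acting on ℝⁿ. Then the kernel of the linear map I − W is one-dimensional and is spanned by the all-ones (constant) vector. -/
open scoped Matrix
open Finset

/-- For `n ≥ 3` odd and a symbol `c : ZMod n → ℝ` that is nonnegative, sums to one, is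
symmetric, with `c 0 < 1` and `c 1 > 0`, the kernel of `I - W`, where `W` is the circulant
matrix with symbol `c` acting on `ℝⁿ`, is one-dimensional and spanned by the all-ones
(constant) vector. -/
theorem stmt15 (n : ℕ) [NeZero n] (hn : 3 ≤ n) (hodd : Odd n) (c : ZMod n → ℝ)
    (hnn : ∀ k : ZMod n, 0 ≤ c k) (hsum : ∑ k : ZMod n, c k = 1)
    (hsym : ∀ k : ZMod n, c (-k) = c k) (hc0 : c 0 < 1) (hc1 : 0 < c 1) :
    LinearMap.ker
        (Matrix.toLin' ((1 : Matrix (ZMod n) (ZMod n) ℝ) - Matrix.circulant c)) =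
      Submodule.span ℝ {fun _ : ZMod n => (1 : ℝ)} ∧
    Module.finrank ℝ
        (LinearMap.ker
          (Matrix.toLin' ((1 : Matrix (ZMod n) (ZMod n) ℝ) - Matrix.circulant c))) = 1 := by
  have hrow : ∀ p : ZMod n, ∑ q : ZMod n, c (p - q) = 1 := by
    intro p
    exact (Fintype.sum_equiv (Equiv.subLeft p) _ c (fun q => rfl)).trans hsum
  have hker : ∀ v : ZMod n → ℝ,
      Matrix.toLin' ((1 : Matrix (ZMod n) (ZMod n) ℝ) - Matrix.circulant c) v = 0 ↔
      ∀ p : ZMod n, v p = ∑ q : ZMod n, c (p - q) * v q := by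
    intro v
    rw [Matrix.toLin'_apply, Matrix.sub_mulVec, Matrix.one_mulVec, funext_iff]
    constructor
    · intro h p
      have := h p
      simp [Matrix.mulVec, dotProduct, Matrix.circulant] at this
      linarith [this]
    · intro h p
      have := h p
      simp [Matrix.mulVec, dotProduct, Matrix.circulant]
      linarith [this]
  have key : LinearMap.ker
        (Matrix.toLin' ((1 : Matrix (ZMod n) (ZMod n) ℝ) - Matrix.circulant c)) =
      Submodule.span ℝ {fun _ : ZMod n => (1 : ℝ)} := by
    apply le_antisymm
    · intro v hv
      rw [LinearMap.mem_ker, hker] at hv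
      -- v attains its maximum at some p₀
      obtain ⟨p₀, -, hp₀⟩ := Finset.exists_max_image (univ : Finset (ZMod n)) v ⟨0, mem_univ 0⟩
      set M := v p₀ with hM
      have hle : ∀ q : ZMod n, v q ≤ M := fun q => hp₀ q (mem_univ q)
      -- if v p = M then v (p-1) = M
      have step : ∀ p : ZMod n, v p = M → v (p - 1) = M := by
        intro p hp
        have hz : ∑ q : ZMod n, c (p - q) * (M - v q) = 0 := by
          have h0 := hv p
          have h1 : ∑ q : ZMod n, c (p - q) * (M - v q)
              = (∑ q : ZMod n, c (p - q)) * M - ∑ q : ZMod n, c (p - q) * v q := by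
            rw [Finset.sum_mul, ← Finset.sum_sub_distrib]
            exact Finset.sum_congr rfl fun q _ => by ring
          rw [h1, hrow p]
          linarith [h0]
        have hterm : ∀ q ∈ (univ : Finset (ZMod n)), c (p - q) * (M - v q) = 0 := by
          rw [← Finset.sum_eq_zero_iff_of_nonneg]
          · exact hz
          · intro q _
            exact mul_nonneg (hnn _) (by linarith [hle q])
        have h1 := hterm (p - 1) (mem_univ _)
        have : c 1 * (M - v (p - 1)) = 0 := by
          simpa using h1
        rcases mul_eq_zero.mp this with h | h
        · exact absurd h (ne_of_gt hc1)
        · linarith [h]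
      -- hence v (p₀ - k) = M for all naturals k
      have iter : ∀ k : ℕ, v (p₀ - (k : ZMod n)) = M := by
        intro k
        induction k with
        | zero => simpa using hM.symm
        | succ k ih =>
          have := step _ ih
          rw [← this]
          congr 1
          push_cast
          ring
      -- every element of ZMod n is of this form
      have hconst : ∀ q : ZMod n, v q = M := by
        intro q
        have := iter (p₀ - q).val
        rwa [ZMod.natCast_val, ZMod.cast_id, sub_sub_cancel] at this
      have : v = M • (fun _ : ZMod n => (1 : ℝ)) := by
        funext q; simpa using hconst q
      rw [this]
      exact Submodule.smul_mem _ _ (Submodule.subset_span rfl)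
    · rw [Submodule.span_le, Set.singleton_subset_iff]
      rw [SetLike.mem_coe, LinearMap.mem_ker, hker]
      intro p
      simp only [mul_one]
      exact (hrow p).symm
  refine ⟨key, ?_⟩
  rw [key]
  apply finrank_span_singleton
  intro h
  have := congrFun h 0
  simpa using this
end

section
/- Let W be a real symmetric n×n matrix such that both W and I − W are positive semidefinite (equivalently, all eigenvalues of W lie in [0,1]). Then for every s ∈ ℝⁿ and every natural number N ≥ 1, ‖(I−W)^N·s − (I−W)^{N+1}·s‖₂ ≤ (N^N/(N+1)^{N+1})·‖s‖₂. Consequently, for every δ > 0 there exists N₀ ∈ ℕ such that ‖(I−W)^N·s − (I−W)^{N+1}·s‖₂ < δ for all N ≥ N₀. -/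
open scoped Matrix Matrix.Norms.L2Operator MatrixOrder
open Filter Topology

/-!
Put `A = I - W`, so that `0 ≤ A ≤ I` in the Loewner order and the spectrum of `A` lies in
`[0, 1]`. The difference `A ^ N - A ^ (N + 1)` is `f(A)` for `f x = x ^ N (1 - x)`, and the
continuous functional calculus is isometric, so its operator norm is at most
`max_{[0,1]} f = f (N / (N + 1)) = N ^ N / (N + 1) ^ (N + 1) ≤ 1 / (N + 1)`.
-/

theorem pow_mul_one_sub_le {x : ℝ} (hx : 0 ≤ x) (N : ℕ) :
    x ^ N * (1 - x) ≤ (N : ℝ) ^ N / (N + 1) ^ (N + 1) := by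
  rcases N.eq_zero_or_pos with rfl | hN
  · simpa using hx
  have hN' : (0 : ℝ) < N := by exact_mod_cast hN
  -- Bernoulli's inequality for the splitting `N = (N + 1) x + (N - (N + 1) x)`.
  have hB := pow_add_mul_le_add_pow (a := (N + 1 : ℝ) * x) (b := N - (N + 1) * x)
    (by positivity) (by nlinarith) (N + 1)
  rw [add_sub_cancel, Nat.add_sub_cancel] at hB
  have h : (N : ℝ) * (x ^ N * (1 - x) * (N + 1) ^ (N + 1)) ≤ N * N ^ N := by
    push_cast [mul_pow] at hB
    linear_combination hB
  rw [le_div_iff₀ (by positivity)]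
  exact le_of_mul_le_mul_left h hN'

theorem abs_pow_sub_pow_succ_le {x : ℝ} (hx₀ : 0 ≤ x) (hx₁ : x ≤ 1) (N : ℕ) :
    |x ^ N - x ^ (N + 1)| ≤ (N : ℝ) ^ N / (N + 1) ^ (N + 1) := by
  have h : x ^ N - x ^ (N + 1) = x ^ N * (1 - x) := by ring
  rw [h, abs_of_nonneg (mul_nonneg (pow_nonneg hx₀ N) (sub_nonneg.2 hx₁))]
  exact pow_mul_one_sub_le hx₀ N

theorem pow_div_succ_pow_succ_le (N : ℕ) :
    (N : ℝ) ^ N / (N + 1) ^ (N + 1) ≤ 1 / (N + 1) := by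
  rw [pow_succ, ← div_div]
  gcongr
  exact div_le_one_of_le₀ (pow_le_pow_left₀ N.cast_nonneg (by linarith) N) (by positivity)

theorem tendsto_pow_div_succ_pow_succ :
    Tendsto (fun N : ℕ => (N : ℝ) ^ N / (N + 1) ^ (N + 1)) atTop (𝓝 0) :=
  squeeze_zero (fun N => by positivity) pow_div_succ_pow_succ_le
    tendsto_one_div_add_atTop_nhds_zero_nat

section FunctionalCalculus

variable {A : Type*} [NormedRing A] [StarRing A] [NormedAlgebra ℝ A] [PartialOrder A]
  [StarOrderedRing A] [IsometricContinuousFunctionalCalculus ℝ A IsSelfAdjoint]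
  [NonnegSpectrumClass ℝ A]

theorem norm_pow_sub_pow_succ_le {a : A} (ha₀ : 0 ≤ a) (ha₁ : a ≤ 1) (N : ℕ) :
    ‖a ^ N - a ^ (N + 1)‖ ≤ (N : ℝ) ^ N / (N + 1) ^ (N + 1) := by
  have hcfc : cfc (fun x : ℝ => x ^ N - x ^ (N + 1)) a = a ^ N - a ^ (N + 1) := by
    rw [cfc_sub (fun x : ℝ => x ^ N) (fun x => x ^ (N + 1)) a, cfc_pow_id a N,
      cfc_pow_id a (N + 1)]
  rw [← hcfc]
  refine norm_cfc_le (by positivity) fun x hx => ?_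
  exact abs_pow_sub_pow_succ_le (spectrum_nonneg_of_nonneg ha₀ hx)
    ((CFC.le_one_iff (R := ℝ) a).mp ha₁ x hx) N

end FunctionalCalculus

theorem Matrix.norm_toEuclideanLin_apply_le {𝕜 ι : Type*} [RCLike 𝕜] [Fintype ι]
    [DecidableEq ι] (M : Matrix ι ι 𝕜) (x : EuclideanSpace 𝕜 ι) :
    ‖M.toEuclideanLin x‖ ≤ ‖M‖ * ‖x‖ :=
  (toEuclideanCLM (𝕜 := 𝕜) M).le_opNorm x

theorem stmt17_general (n : ℕ) (W : Matrix (Fin n) (Fin n) ℝ)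
    (hpsd : W.PosSemidef) (hpsd' : ((1 : Matrix (Fin n) (Fin n) ℝ) - W).PosSemidef)
    (s : EuclideanSpace ℝ (Fin n)) :
    (∀ N : ℕ, 1 ≤ N →
      ‖Matrix.toEuclideanLin (((1 : Matrix (Fin n) (Fin n) ℝ) - W) ^ N) s -
          Matrix.toEuclideanLin (((1 : Matrix (Fin n) (Fin n) ℝ) - W) ^ (N + 1)) s‖ ≤
        (N : ℝ) ^ N / (N + 1 : ℝ) ^ (N + 1) * ‖s‖) ∧
    ∀ δ : ℝ, 0 < δ → ∃ N₀ : ℕ, ∀ N ≥ N₀,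
      ‖Matrix.toEuclideanLin (((1 : Matrix (Fin n) (Fin n) ℝ) - W) ^ N) s -
          Matrix.toEuclideanLin (((1 : Matrix (Fin n) (Fin n) ℝ) - W) ^ (N + 1)) s‖ < δ := by
  have h₀ : 0 ≤ 1 - W := Matrix.nonneg_iff_posSemidef.mpr hpsd'
  have h₁ : 1 - W ≤ 1 := Matrix.le_iff.mpr (by simpa using hpsd)
  have hbound : ∀ N : ℕ,
      ‖Matrix.toEuclideanLin ((1 - W) ^ N) s - Matrix.toEuclideanLin ((1 - W) ^ (N + 1)) s‖ ≤
        (N : ℝ) ^ N / (N + 1 : ℝ) ^ (N + 1) * ‖s‖ := fun N => by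
    rw [← LinearMap.sub_apply, ← map_sub]
    exact (Matrix.norm_toEuclideanLin_apply_le _ s).trans
      (by gcongr; exact norm_pow_sub_pow_succ_le h₀ h₁ N)
  refine ⟨fun N _ => hbound N, fun δ hδ => ?_⟩
  have hlim := tendsto_pow_div_succ_pow_succ.mul_const ‖s‖
  rw [zero_mul] at hlim
  obtain ⟨N₀, hN₀⟩ := eventually_atTop.mp (hlim.eventually (gt_mem_nhds hδ))
  exact ⟨N₀, fun N hN => (hbound N).trans_lt (hN₀ N hN)⟩

/-- Let `W` be a real symmetric `n×n` matrix with both `W` and `I - W` positive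
semidefinite (all eigenvalues of `W` in `[0,1]`). Then for every `s ∈ ℝⁿ` and every
`N ≥ 1`, `‖(I-W)^N s - (I-W)^(N+1) s‖₂ ≤ (N^N/(N+1)^(N+1)) ‖s‖₂` (Euclidean norm), and
consequently for every `δ > 0` there exists `N₀` such that
`‖(I-W)^N s - (I-W)^(N+1) s‖₂ < δ` for all `N ≥ N₀`. -/
theorem stmt17 (n : ℕ) (W : Matrix (Fin n) (Fin n) ℝ) (hsym : W.IsSymm)
    (hpsd : W.PosSemidef) (hpsd' : ((1 : Matrix (Fin n) (Fin n) ℝ) - W).PosSemidef)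
    (s : EuclideanSpace ℝ (Fin n)) :
    (∀ N : ℕ, 1 ≤ N →
      ‖Matrix.toEuclideanLin (((1 : Matrix (Fin n) (Fin n) ℝ) - W) ^ N) s -
          Matrix.toEuclideanLin (((1 : Matrix (Fin n) (Fin n) ℝ) - W) ^ (N + 1)) s‖ ≤
        (N : ℝ) ^ N / (N + 1 : ℝ) ^ (N + 1) * ‖s‖) ∧
    ∀ δ : ℝ, 0 < δ → ∃ N₀ : ℕ, ∀ N ≥ N₀,
      ‖Matrix.toEuclideanLin (((1 : Matrix (Fin n) (Fin n) ℝ) - W) ^ N) s -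
          Matrix.toEuclideanLin (((1 : Matrix (Fin n) (Fin n) ℝ) - W) ^ (N + 1)) s‖ < δ :=
  stmt17_general n W hpsd hpsd' s
end
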